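/- arXiv:2504.19259 — 3 statements merged into one kernel-verified Lean document; each statement's English description precedes it below -/
import Mathlib

section
/- For every q ∈ S_n and every c ∈ ℝ, the sublevel set {θ ∈ ℝⁿ : L_q(θ) ≤ c} of the loss in θ coordinates is compact; in particular L_q is coercive, i.e., L_q(θ) → ∞ as ‖θ‖ → ∞. -/
open Filter

noncomputable section

abbrev E (n : ℕ) := EuclideanSpace ℝ (Fin n)

/-- The open probability simplex `S_n` inside `ℝ^{n+1}`. -/
def simplex (n : ℕ) : Set (Fin (n+1) → ℝ) :=
  {p | (∀ i, 0 < p i) ∧ ∑ i, p i = 1}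

/-- The mixture (`η`) coordinate domain `Δ_n`. -/
def Δset (n : ℕ) : Set (E n) := {η | (∀ i, 0 < η i) ∧ ∑ i, η i < 1}

/-- The distribution in `S_n` corresponding to `η` coordinates. -/
def mixDist {n : ℕ} (η : E n) : Fin (n+1) → ℝ :=
  Fin.snoc (fun i => η i) (1 - ∑ i, η i)

/-- The distribution in `S_n` corresponding to `θ` coordinates. -/
def expDist {n : ℕ} (θ : E n) : Fin (n+1) → ℝ :=
  Fin.snoc (fun i => Real.exp (θ i) / (1 + ∑ j, Real.exp (θ j)))
    (1 / (1 + ∑ j, Real.exp (θ j)))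

/-- The `η` coordinates of a distribution `q ∈ S_n`. -/
def etaCoord {n : ℕ} (q : Fin (n+1) → ℝ) : E n := WithLp.toLp 2 (fun i : Fin n => q i.castSucc)

/-- The `θ` coordinates of a distribution `q ∈ S_n`. -/
def thetaCoord {n : ℕ} (q : Fin (n+1) → ℝ) : E n :=
  WithLp.toLp 2 (fun i : Fin n => Real.log (q i.castSucc / q (Fin.last n)))

/-- Kullback–Leibler divergence `D(q‖p)`. -/
def KL {n : ℕ} (q p : Fin (n+1) → ℝ) : ℝ := ∑ i, q i * Real.log (q i / p i)

/-- Log-partition function `ψ(θ) = log(1 + Σ e^{θ_i})`. -/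
def psi {n : ℕ} (θ : E n) : ℝ := Real.log (1 + ∑ i, Real.exp (θ i))

/-- Negative entropy `φ(η)`. -/
def phi {n : ℕ} (η : E n) : ℝ :=
  (∑ i, η i * Real.log (η i)) + (1 - ∑ i, η i) * Real.log (1 - ∑ i, η i)

/-- The loss `L_q` in `η` coordinates: `η ↦ D(q ‖ p(η))`. -/
def Leta {n : ℕ} (q : Fin (n+1) → ℝ) (η : E n) : ℝ := KL q (mixDist η)

/-- The loss `L_q` in `θ` coordinates: `θ ↦ D(q ‖ p(θ))`. -/
def Ltheta {n : ℕ} (q : Fin (n+1) → ℝ) (θ : E n) : ℝ := KL q (expDist θ)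

/-- The Hessian of `f : ℝⁿ → ℝ` at `x`, as the `n × n` matrix of second partial
derivatives. -/
def hess {n : ℕ} (f : E n → ℝ) (x : E n) : Matrix (Fin n) (Fin n) ℝ :=
  Matrix.of fun i j =>
    fderiv ℝ (fun y => fderiv ℝ f y (EuclideanSpace.single j 1)) x (EuclideanSpace.single i 1)

/-- The set of (real) eigenvalues of a matrix. -/
def lamSet {n : ℕ} (A : Matrix (Fin n) (Fin n) ℝ) : Set ℝ :=
  {μ | ∃ v : Fin n → ℝ, v ≠ 0 ∧ A.mulVec v = μ • v}

/-- Largest eigenvalue `λ_max`. -/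
def lamMax {n : ℕ} (A : Matrix (Fin n) (Fin n) ℝ) : ℝ := sSup (lamSet A)

/-- Smallest eigenvalue `λ_min`. -/
def lamMin {n : ℕ} (A : Matrix (Fin n) (Fin n) ℝ) : ℝ := sInf (lamSet A)

/-- Condition number `cond(A) = λ_max(A)/λ_min(A)`. -/
def condNum {n : ℕ} (A : Matrix (Fin n) (Fin n) ℝ) : ℝ := lamMax A / lamMin A

/-- Operator 2-norm of a matrix (induced by the Euclidean norm). -/
def opNorm {n : ℕ} (A : Matrix (Fin n) (Fin n) ℝ) : ℝ :=
  ‖Matrix.toEuclideanCLM (𝕜 := ℝ) A‖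


/-!
Write `p = p(θ)`. Since every `-log p_j` is nonnegative, for each index `j`
`L_q(θ) ≥ ∑ q log q + q_j · (-log p_j)`.
Since `θ_i = (-log p_{n+1}) - (-log p_i)`, every coordinate satisfies
`(min q) · |θ_i| ≤ L_q(θ) - ∑ q log q`. Hence sublevel sets are closed subsets of a
coordinate box, so compact, and compact sublevel sets force coercivity.
-/

lemma le_one_of_mem_simplex {n : ℕ} {p : Fin (n+1) → ℝ} (hp : p ∈ simplex n)
    (i : Fin (n+1)) : p i ≤ 1 :=
  hp.2 ▸ Finset.single_le_sum (fun k _ => (hp.1 k).le) (Finset.mem_univ i)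

lemma neg_log_nonneg_of_mem_simplex {n : ℕ} {p : Fin (n+1) → ℝ} (hp : p ∈ simplex n)
    (i : Fin (n+1)) : 0 ≤ -Real.log (p i) :=
  neg_nonneg.2 (Real.log_nonpos (hp.1 i).le (le_one_of_mem_simplex hp i))

lemma sum_mul_log_add_mul_neg_log_le_KL {n : ℕ} {q p : Fin (n+1) → ℝ} (hq : ∀ i, 0 ≤ q i)
    (hp : p ∈ simplex n) (j : Fin (n+1)) :
    (∑ i, q i * Real.log (q i)) + q j * -Real.log (p j) ≤ KL q p := by
  have hterm : ∀ i,
      q i * Real.log (q i / p i) = q i * Real.log (q i) + q i * -Real.log (p i) := by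
    intro i
    rcases (hq i).eq_or_lt with hqi | hqi
    · simp [← hqi]
    · rw [Real.log_div hqi.ne' (hp.1 i).ne']
      ring
  have hcross : q j * -Real.log (p j) ≤ ∑ i, q i * -Real.log (p i) :=
    Finset.single_le_sum (f := fun i => q i * -Real.log (p i))
      (fun i _ => mul_nonneg (hq i) (neg_log_nonneg_of_mem_simplex hp i))
      (Finset.mem_univ j)
  simp only [KL, hterm, Finset.sum_add_distrib]
  linarith

lemma one_add_sum_exp_pos {n : ℕ} (θ : E n) : 0 < 1 + ∑ j, Real.exp (θ j) := by
  positivity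

lemma expDist_mem_simplex {n : ℕ} (θ : E n) : expDist θ ∈ simplex n := by
  have hS := one_add_sum_exp_pos θ
  refine ⟨fun i => ?_, ?_⟩
  · induction i using Fin.lastCases <;> simp only [expDist, Fin.snoc_last, Fin.snoc_castSucc] <;>
      positivity
  · simp only [expDist, Fin.sum_univ_castSucc, Fin.snoc_castSucc, Fin.snoc_last,
      ← Finset.sum_div]
    rw [← add_div, add_comm, div_self hS.ne']

lemma expDist_castSucc {n : ℕ} (θ : E n) (i : Fin n) :
    expDist θ i.castSucc = Real.exp (θ i) * expDist θ (Fin.last n) := by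
  simp only [expDist, Fin.snoc_castSucc, Fin.snoc_last]
  ring

lemma continuous_expDist_apply {n : ℕ} (i : Fin (n+1)) :
    Continuous fun θ : E n => expDist θ i := by
  have hS : Continuous fun θ : E n => 1 + ∑ j, Real.exp (θ j) := by fun_prop
  induction i using Fin.lastCases with
  | last =>
    simp only [expDist, Fin.snoc_last]
    exact continuous_const.div hS fun θ => (one_add_sum_exp_pos θ).ne'
  | cast i =>
    simp only [expDist, Fin.snoc_castSucc]
    exact (by fun_prop : Continuous fun θ : E n => Real.exp (θ i)).div hS
      fun θ => (one_add_sum_exp_pos θ).ne'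

lemma continuous_Ltheta {n : ℕ} {q : Fin (n+1) → ℝ} (hq : ∀ i, 0 < q i) :
    Continuous (Ltheta q) :=
  show Continuous fun θ => ∑ i, q i * Real.log (q i / expDist θ i) from
  continuous_finsetSum _ fun i _ => continuous_const.mul <|
    (continuous_const.div (continuous_expDist_apply i)
      fun θ => ((expDist_mem_simplex θ).1 i).ne').log
    fun θ => (div_pos (hq i) ((expDist_mem_simplex θ).1 i)).ne'

lemma mul_abs_le_Ltheta_sub {n : ℕ} {q : Fin (n+1) → ℝ} {m : ℝ} (hm : 0 ≤ m)
    (hmq : ∀ j, m ≤ q j) (θ : E n) (i : Fin n) :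
    m * |θ i| ≤ Ltheta q θ - ∑ j, q j * Real.log (q j) := by
  have hp := expDist_mem_simplex θ
  have hq : ∀ j, 0 ≤ q j := fun j => hm.trans (hmq j)
  have hθ : m * θ i = m * -Real.log (expDist θ (Fin.last n))
      - m * -Real.log (expDist θ i.castSucc) := by
    rw [expDist_castSucc, Real.log_mul (Real.exp_pos _).ne' (hp.1 _).ne', Real.log_exp]
    ring
  have hbound : ∀ j, 0 ≤ m * -Real.log (expDist θ j)
      ∧ m * -Real.log (expDist θ j) ≤ Ltheta q θ - ∑ j, q j * Real.log (q j) := by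
    intro j
    have hlog := neg_log_nonneg_of_mem_simplex hp j
    refine ⟨mul_nonneg hm hlog, ?_⟩
    have := sum_mul_log_add_mul_neg_log_le_KL hq hp j
    have := mul_le_mul_of_nonneg_right (hmq j) hlog
    unfold Ltheta
    linarith
  rw [← abs_of_nonneg hm, ← abs_mul, hθ]
  exact abs_sub_le_of_nonneg_of_le (hbound _).1 (hbound _).2 (hbound _).1 (hbound _).2

lemma isCompact_setOf_forall_abs_le {ι : Type*} [Fintype ι] (R : ℝ) :
    IsCompact {x : EuclideanSpace ℝ ι | ∀ i, |x i| ≤ R} := by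
  have hbox : IsCompact (Set.univ.pi fun _ : ι => Set.Icc (-R) R) :=
    isCompact_univ_pi fun _ => isCompact_Icc
  convert (EuclideanSpace.equiv ι ℝ).toHomeomorph.isCompact_preimage.2 hbox using 1
  ext x
  simp [abs_le, Pi.le_def, forall_and]

lemma tendsto_cobounded_atTop_of_isCompact_sublevel {α : Type*} [PseudoMetricSpace α]
    {f : α → ℝ} (hf : ∀ c, IsCompact {x | f x ≤ c}) :
    Tendsto f (Bornology.cobounded α) atTop :=
  tendsto_atTop.2 fun c => mem_of_superset (Bornology.isBounded_def.1 (hf c).isBounded)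
    fun _ hx => (not_le.1 (Set.notMem_ofPred_iff.1 hx)).le

/-- Sublevel sets of `L_q` in `θ` coordinates are compact; `L_q` is coercive. -/
theorem stmt_10 {n : ℕ} (q : Fin (n+1) → ℝ) (hq : q ∈ simplex n) :
    (∀ c : ℝ, IsCompact {θ : E n | Ltheta q θ ≤ c}) ∧
    Filter.Tendsto (Ltheta q) (Bornology.cobounded (E n)) Filter.atTop := by
  obtain ⟨j₀, hj₀⟩ := Finite.exists_min q
  have hm : 0 < q j₀ := hq.1 j₀
  have hsublevel : ∀ c, {θ : E n | Ltheta q θ ≤ c} ⊆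
      {θ | ∀ i, |θ i| ≤ (c - ∑ j, q j * Real.log (q j)) / q j₀} := fun c θ hθ i => by
    rw [le_div_iff₀' hm]
    exact (mul_abs_le_Ltheta_sub hm.le hj₀ θ i).trans (sub_le_sub_right hθ _)
  have hcompact : ∀ c : ℝ, IsCompact {θ : E n | Ltheta q θ ≤ c} := fun c =>
    (isCompact_setOf_forall_abs_le _).of_isClosed_subset
      (isClosed_le (continuous_Ltheta hq.1) continuous_const) (hsublevel c)
  exact ⟨hcompact, tendsto_cobounded_atTop_of_isCompact_sublevel hcompact⟩

end
end

section
/- For all p, q ∈ S_n with coordinates θ_p, θ_q, η_p, η_q, the two Bregman divergences agree with the Kullback–Leibler divergence: ψ(θ_p) − ψ(θ_q) − ⟨∇ψ(θ_q), θ_p − θ_q⟩ = φ(η_q) − φ(η_p) − ⟨∇φ(η_p), η_q − η_p⟩ = D(q‖p), where ⟨·,·⟩ is the Euclidean inner product on ℝⁿ. -/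
open Filter

noncomputable section

/-!
In θ coordinates `θ_i = log (p_i / p_{n+1})`, one has `ψ(θ_p) = -log p_{n+1}` and
`∇ψ(θ_q) = η_q`; in η coordinates `φ(η_p) = Σ p_i log p_i` and `∇φ(η_p) = θ_p`. Because
`Σ q_i = 1`, the cross term `Σ q_i log p_i` equals `⟨η_q, θ_p⟩ + log p_{n+1}`, so
`D(q‖p) = ⟨η_q, θ_q - θ_p⟩ + log q_{n+1} - log p_{n+1}`, and both Bregman divergences reduce to
this same expression.
-/

open Real InnerProductSpace

variable {n : ℕ}

lemma hasGradientAt_of_hasFDerivAt_sum_proj {f : E n → ℝ} {x : E n} {g : Fin n → ℝ}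
    (h : HasFDerivAt f (∑ i, g i • (EuclideanSpace.proj i : E n →L[ℝ] ℝ)) x) :
    HasGradientAt f (WithLp.toLp 2 g) x := by
  refine hasGradientAt_iff_hasFDerivAt.2 (h.congr_fderiv ?_)
  ext v
  simp [toDual_apply_apply, PiLp.inner_apply, mul_comm]

lemma hasFDerivAt_mul_log_apply {η : E n} {i : Fin n} (hi : η i ≠ 0) :
    HasFDerivAt (fun η : E n => η i * log (η i))
      ((log (η i) + 1) • (EuclideanSpace.proj i : E n →L[ℝ] ℝ)) η :=
  (hasDerivAt_mul_log hi).comp_hasFDerivAt (f := fun η : E n => η i) η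
    (PiLp.hasFDerivAt_apply (𝕜 := ℝ) 2 η i)

lemma gradient_psi (θ : E n) : gradient psi θ = etaCoord (expDist θ) := by
  set Z := 1 + ∑ j, exp (θ j)
  have hpsi : HasFDerivAt psi (Z⁻¹ • ∑ i, exp (θ i) • EuclideanSpace.proj i) θ :=
    ((HasFDerivAt.fun_sum fun i _ => (PiLp.hasFDerivAt_apply (𝕜 := ℝ) 2 θ i).exp).const_add 1).log
      (by positivity)
  simp only [Finset.smul_sum, smul_smul, ← div_eq_inv_mul] at hpsi
  rw [(hasGradientAt_of_hasFDerivAt_sum_proj hpsi).gradient]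
  simp [etaCoord, expDist, Z]

lemma gradient_phi {η : E n} (hη : η ∈ Δset n) : gradient phi η = thetaCoord (mixDist η) := by
  obtain ⟨hpos, hsum⟩ := hη
  set s := 1 - ∑ i, η i
  have hs : 0 < s := sub_pos.2 hsum
  have hphi : HasFDerivAt phi (∑ i, (log (η i) + 1) • EuclideanSpace.proj i
      + (log s + 1) • -∑ i, (EuclideanSpace.proj i : E n →L[ℝ] ℝ)) η := by
    have hent := HasFDerivAt.fun_sum (u := (Finset.univ : Finset (Fin n))) fun i _ =>
      hasFDerivAt_mul_log_apply (i := i) (hpos i).ne'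
    have hrest := (hasDerivAt_mul_log hs.ne').comp_hasFDerivAt η <|
      (HasFDerivAt.fun_sum (u := (Finset.univ : Finset (Fin n))) fun i _ =>
        PiLp.hasFDerivAt_apply (𝕜 := ℝ) 2 η i).const_sub 1
    exact hent.add hrest
  rw [smul_neg, Finset.smul_sum, ← sub_eq_add_neg, ← Finset.sum_sub_distrib] at hphi
  simp only [← sub_smul, add_sub_add_right_eq_sub] at hphi
  rw [(hasGradientAt_of_hasFDerivAt_sum_proj hphi).gradient]
  ext i
  simp [thetaCoord, mixDist, s, log_div (hpos i).ne' hs.ne']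

variable {p q : Fin (n + 1) → ℝ}

lemma sum_castSucc_eq_one_sub_last (hp : ∑ i, p i = 1) :
    ∑ i : Fin n, p i.castSucc = 1 - p (Fin.last n) := by
  rw [← hp, Fin.sum_univ_castSucc, add_sub_cancel_right]

lemma etaCoord_mem_Δset (hp : p ∈ simplex n) : etaCoord p ∈ Δset n :=
  ⟨fun i => hp.1 _, by
    simpa [etaCoord, sum_castSucc_eq_one_sub_last hp.2] using hp.1 (Fin.last n)⟩

lemma mixDist_etaCoord (hp : p ∈ simplex n) : mixDist (etaCoord p) = p := by
  funext i
  induction i using Fin.lastCases with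
  | last => simp [mixDist, etaCoord, sum_castSucc_eq_one_sub_last hp.2]
  | cast i => simp [mixDist, etaCoord]

lemma one_add_sum_exp_thetaCoord (hp : p ∈ simplex n) :
    1 + ∑ i, exp (thetaCoord p i) = (p (Fin.last n))⁻¹ := by
  have hlast := hp.1 (Fin.last n)
  simp only [thetaCoord, fun i : Fin n => exp_log (div_pos (hp.1 i.castSucc) hlast),
    ← Finset.sum_div, sum_castSucc_eq_one_sub_last hp.2]
  field_simp
  ring

lemma expDist_thetaCoord (hp : p ∈ simplex n) : expDist (thetaCoord p) = p := by
  have hlast := hp.1 (Fin.last n)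
  funext i
  induction i using Fin.lastCases with
  | last => simp [expDist, one_add_sum_exp_thetaCoord hp]
  | cast i =>
    simp only [expDist, Fin.snoc_castSucc, one_add_sum_exp_thetaCoord hp]
    simp [thetaCoord, exp_log (div_pos (hp.1 i.castSucc) hlast), hlast.ne']

lemma psi_thetaCoord (hp : p ∈ simplex n) : psi (thetaCoord p) = -log (p (Fin.last n)) := by
  rw [psi, one_add_sum_exp_thetaCoord hp, log_inv]

lemma phi_etaCoord (hp : p ∈ simplex n) : phi (etaCoord p) = ∑ i, p i * log (p i) := by
  simp [phi, etaCoord, sum_castSucc_eq_one_sub_last hp.2, Fin.sum_univ_castSucc]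

lemma sum_mul_log_eq_inner_thetaCoord_add (hq : ∑ i, q i = 1) (hp : ∀ i, 0 < p i) :
    ∑ i, q i * log (p i) = ⟪etaCoord q, thetaCoord p⟫_ℝ + log (p (Fin.last n)) := by
  have hinner : ⟪etaCoord q, thetaCoord p⟫_ℝ = ∑ i : Fin n, q i.castSucc * log (p i.castSucc)
      - (1 - q (Fin.last n)) * log (p (Fin.last n)) := by
    simp only [PiLp.inner_apply, RCLike.inner_apply, conj_trivial, etaCoord, thetaCoord,
      log_div (hp _).ne' (hp _).ne']
    rw [← sum_castSucc_eq_one_sub_last hq, Finset.sum_mul, ← Finset.sum_sub_distrib]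
    exact Finset.sum_congr rfl fun i _ => by ring
  rw [hinner, Fin.sum_univ_castSucc]
  ring

lemma KL_eq_inner_add (hp : ∀ i, 0 < p i) (hq : q ∈ simplex n) :
    KL q p = ⟪etaCoord q, thetaCoord q - thetaCoord p⟫_ℝ
      + log (q (Fin.last n)) - log (p (Fin.last n)) := by
  have hKL : KL q p = ∑ i, q i * log (q i) - ∑ i, q i * log (p i) := by
    simp only [KL, log_div (hq.1 _).ne' (hp _).ne', mul_sub, Finset.sum_sub_distrib]
  rw [hKL, sum_mul_log_eq_inner_thetaCoord_add hq.2 hq.1,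
    sum_mul_log_eq_inner_thetaCoord_add hq.2 hp, inner_sub_right]
  ring

/-- Both Bregman divergences agree with the KL divergence. -/
theorem stmt_13 {n : ℕ} (p q : Fin (n+1) → ℝ)
    (hp : p ∈ simplex n) (hq : q ∈ simplex n) :
    psi (thetaCoord p) - psi (thetaCoord q) -
        (inner ℝ (gradient psi (thetaCoord q)) (thetaCoord p - thetaCoord q) : ℝ) = KL q p ∧
    phi (etaCoord q) - phi (etaCoord p) -
        (inner ℝ (gradient phi (etaCoord p)) (etaCoord q - etaCoord p) : ℝ) = KL q p := by
  rw [KL_eq_inner_add hp.1 hq]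
  constructor
  · rw [gradient_psi, expDist_thetaCoord hq, psi_thetaCoord hp, psi_thetaCoord hq,
      inner_sub_right, inner_sub_right]
    ring
  · rw [gradient_phi (etaCoord_mem_Δset hp), mixDist_etaCoord hp, phi_etaCoord hq,
      phi_etaCoord hp, sum_mul_log_eq_inner_thetaCoord_add hq.2 hq.1,
      sum_mul_log_eq_inner_thetaCoord_add hp.2 hp.1, inner_sub_right, inner_sub_right,
      real_inner_comm (etaCoord q), real_inner_comm (etaCoord p)]
    ring

end
end

section
/- Let Q be an n×n real symmetric positive definite matrix with condition number κ = λ_max(Q)/λ_min(Q), and set α = 2/(λ_min(Q) + λ_max(Q)). Then there exists a symmetric matrix Δ ∈ ℝ^{n×n} with ‖Δ‖₂ = 1/κ such that the matrix M = I − α(I + Δ)Q has −1 as an eigenvalue; consequently there exists e(0) ≠ 0 such that the iteration e(k+1) = M·e(k) satisfies e(k) = (−1)ᵏ·e(0) for all k ≥ 0, so e(k) does not converge to 0. -/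
open Filter

noncomputable section

open Matrix

section Eigenvalues

variable {n : ℕ}

theorem lamSet_eq_spectrum (A : Matrix (Fin n) (Fin n) ℝ) : lamSet A = spectrum ℝ A := by
  ext μ
  rw [← spectrum_toLin', ← Module.End.hasEigenvalue_iff_mem_spectrum,
    Module.End.hasEigenvalue_iff, Submodule.ne_bot_iff]
  simp [lamSet, toLin'_apply, and_comm]

namespace Matrix.IsHermitian

variable {A : Matrix (Fin n) (Fin n) ℝ} (hA : A.IsHermitian)
include hA

theorem lamSet_eq_range_eigenvalues : lamSet A = Set.range hA.eigenvalues := by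
  rw [lamSet_eq_spectrum, hA.spectrum_real_eq_range_eigenvalues]

theorem lamMax_mem_lamSet [Nonempty (Fin n)] : lamMax A ∈ lamSet A := by
  rw [lamMax, hA.lamSet_eq_range_eigenvalues]
  exact (Set.range_nonempty _).csSup_mem (Set.finite_range _)

theorem lamMin_mem_lamSet [Nonempty (Fin n)] : lamMin A ∈ lamSet A := by
  rw [lamMin, hA.lamSet_eq_range_eigenvalues]
  exact (Set.range_nonempty _).csInf_mem (Set.finite_range _)

end Matrix.IsHermitian

theorem Matrix.PosDef.pos_of_mem_lamSet {A : Matrix (Fin n) (Fin n) ℝ} (hA : A.PosDef) {μ : ℝ}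
    (hμ : μ ∈ lamSet A) : 0 < μ := by
  rw [hA.isHermitian.lamSet_eq_range_eigenvalues] at hμ
  obtain ⟨i, rfl⟩ := hμ
  exact hA.eigenvalues_pos i

theorem opNorm_smul_one [Nonempty (Fin n)] (c : ℝ) :
    opNorm (c • 1 : Matrix (Fin n) (Fin n) ℝ) = |c| := by
  rw [opNorm, map_smul, map_one, norm_smul, norm_one, mul_one, Real.norm_eq_abs]

end Eigenvalues

theorem Matrix.one_sub_smul_one_add_smul_one_mul_mulVec {R ι : Type*} [CommRing R] [Fintype ι]
    [DecidableEq ι] {Q : Matrix ι ι R} {v : ι → R} {μ : R} (hv : Q *ᵥ v = μ • v) (α c : R) :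
    (1 - α • ((1 + c • 1) * Q)) *ᵥ v = (1 - α * (1 + c) * μ) • v := by
  rw [sub_mulVec, one_mulVec, smul_mulVec, add_mul, one_mul, smul_mul, one_mul, add_mulVec,
    smul_mulVec, hv]
  module

theorem eq_pow_smul_of_apply_eq_smul {R M F : Type*} [Semiring R] [AddCommMonoid M] [Module R M]
    [FunLike F M M] [LinearMapClass F R M M] {T : F} {x : M} {μ : R} (hx : T x = μ • x)
    {e : ℕ → M} (h0 : e 0 = x) (hrec : ∀ k, e (k + 1) = T (e k)) (k : ℕ) : e k = μ ^ k • x := by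
  induction k with
  | zero => simpa using h0
  | succ k ih => rw [hrec, ih, map_smul, hx, pow_succ, mul_smul]

theorem not_tendsto_neg_one_pow_smul_nhds_zero {V : Type*} [NormedAddCommGroup V]
    [NormedSpace ℝ V] {x : V} (hx : x ≠ 0) :
    ¬Tendsto (fun k : ℕ => (-1 : ℝ) ^ k • x) atTop (nhds 0) := by
  intro h
  have hnorm := h.norm
  simp only [norm_smul, norm_pow, norm_neg, norm_one, one_pow, one_mul, norm_zero] at hnorm
  exact hx (norm_eq_zero.mp (tendsto_nhds_unique tendsto_const_nhds hnorm))

/-- Robust stability under relative deterministic noise: a destabilizing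
perturbation of norm `1/κ`. -/
theorem stmt_15 {n : ℕ} (hn : 0 < n) (Q : Matrix (Fin n) (Fin n) ℝ)
    (hQ : Q.PosDef) :
    (let κ := condNum Q
     let α := 2 / (lamMin Q + lamMax Q)
     ∃ Δ : Matrix (Fin n) (Fin n) ℝ, Δ.IsSymm ∧ opNorm Δ = 1 / κ ∧
       ∃ e₀ : E n, e₀ ≠ 0 ∧
         Matrix.toEuclideanCLM (𝕜 := ℝ)
           ((1 : Matrix (Fin n) (Fin n) ℝ) - α • ((1 + Δ) * Q)) e₀ = -e₀ ∧
         ∀ e : ℕ → E n, e 0 = e₀ →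
           (∀ k, e (k + 1) =
             Matrix.toEuclideanCLM (𝕜 := ℝ)
               ((1 : Matrix (Fin n) (Fin n) ℝ) - α • ((1 + Δ) * Q)) (e k)) →
           (∀ k, e k = ((-1 : ℝ) ^ k) • e₀) ∧
           ¬ Filter.Tendsto e Filter.atTop (nhds 0)) := by
  intro κ α
  have : Nonempty (Fin n) := ⟨⟨0, hn⟩⟩
  have hmin := hQ.pos_of_mem_lamSet hQ.isHermitian.lamMin_mem_lamSet
  have hmax := hQ.pos_of_mem_lamSet hQ.isHermitian.lamMax_mem_lamSet
  obtain ⟨v, hv, hQv⟩ := hQ.isHermitian.lamMax_mem_lamSet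
  have hκ : 0 < κ := div_pos hmax hmin
  -- the uniform relative perturbation `Δ = κ⁻¹ I` scales `α λ_max` up to exactly `2`
  have hscale : α * (1 + 1 / κ) * lamMax Q = 2 := by
    simp only [α, κ, condNum]
    field_simp
    ring
  have hflip : toEuclideanCLM (𝕜 := ℝ) (1 - α • ((1 + (1 / κ) • 1) * Q)) (WithLp.toLp 2 v) =
      -WithLp.toLp 2 v := by
    rw [toEuclideanCLM_toLp, one_sub_smul_one_add_smul_one_mul_mulVec hQv, hscale]
    norm_num
  refine ⟨(1 / κ) • 1, by simp [IsSymm], ?_, WithLp.toLp 2 v, by simpa using hv, hflip,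
    fun e h0 hrec => ?_⟩
  · rw [opNorm_smul_one, abs_of_pos (one_div_pos.mpr hκ)]
  · have he := eq_pow_smul_of_apply_eq_smul (hflip.trans (neg_one_smul ℝ _).symm) h0 hrec
    exact ⟨he, funext he ▸ not_tendsto_neg_one_pow_smul_nhds_zero (by simpa using hv)⟩
end
end
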